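/- arXiv:2305.08085 — 2 statements merged into one kernel-verified Lean document; each statement's English description precedes it below -/
import Mathlib

section
/- With monatomic ideal-gas state equations e = ρc²(G − 1/γ), p = ρc²/γ where γ = mc²/(k_B T), and triple-tensor coefficients a = ρc²(1/4 + G/γ), b = ρc²G/γ, the compatibility condition a = (1/4){ −b + (e + p − T p_T)·(b_ρ/p_ρ) + T·b_T } holds identically, where subscripts denote partial derivatives with respect to ρ and T. -/
/-!
Write `θ = 1/γ = k_B T/(mc²)`, which is linear in `T`. Then `p = ρc²θ` and `b = ρc²·θ G(1/θ)`
are linear in `ρ`, so `b_ρ/p_ρ = G` and `e + p - T p_T = ρc²(G - θ)`. The only genuine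
derivative is `T b_T = ρc²θ(G - γG'(γ))`, and the Bessel-ratio equation
`G' = -1 - 5G/γ + G²` turns it into `ρc²(6G/γ + 1 - G²)`; the `G²` terms then cancel.
-/

theorem hasDerivAt_mul_comp_inv {G : ℝ → ℝ} {G' θ : ℝ} (hθ : θ ≠ 0)
    (hG : HasDerivAt G G' θ⁻¹) :
    HasDerivAt (fun t => t * G t⁻¹) (G θ⁻¹ - θ⁻¹ * G') θ := by
  refine ((hasDerivAt_id' θ).mul (hG.comp θ (hasDerivAt_inv hθ))).congr_deriv ?_
  simp only [Function.comp_apply]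
  field_simp
  ring

theorem hasDerivAt_const_mul_mul_comp_inv {G : ℝ → ℝ} {G' k T : ℝ} (hkT : k * T ≠ 0)
    (hG : HasDerivAt G G' (k * T)⁻¹) :
    HasDerivAt (fun t => k * t * G (k * t)⁻¹) ((G (k * T)⁻¹ - (k * T)⁻¹ * G') * k) T := by
  have h := (hasDerivAt_mul_comp_inv hkT hG).comp T ((hasDerivAt_id' T).const_mul k)
  rwa [mul_one] at h

theorem monatomic_compatibility_general
    (c m kB : ℝ) (hc : 0 < c) (hm : 0 < m) (hkB : 0 < kB)
    (G : ℝ → ℝ)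
    (hG : ∀ x : ℝ, 0 < x → HasDerivAt G (-1 - 5 * G x / x + (G x) ^ 2) x)
    (γ : ℝ → ℝ) (hγ : ∀ T : ℝ, γ T = m * c ^ 2 / (kB * T))
    (e p a b : ℝ → ℝ → ℝ)
    (he : ∀ ρ T : ℝ, e ρ T = ρ * c ^ 2 * (G (γ T) - 1 / γ T))
    (hp : ∀ ρ T : ℝ, p ρ T = ρ * c ^ 2 / γ T)
    (ha : ∀ ρ T : ℝ, a ρ T = ρ * c ^ 2 * (1 / 4 + G (γ T) / γ T))
    (hb : ∀ ρ T : ℝ, b ρ T = ρ * c ^ 2 * G (γ T) / γ T)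
    (ρ T : ℝ) (hT : 0 < T) :
    a ρ T = (1 / 4) * (-(b ρ T)
      + (e ρ T + p ρ T - T * deriv (fun T' => p ρ T') T)
        * (deriv (fun ρ' => b ρ' T) ρ / deriv (fun ρ' => p ρ' T) ρ)
      + T * deriv (fun T' => b ρ T') T) := by
  set k := kB / (m * c ^ 2)
  have hkT : 0 < k * T := by positivity
  have hγ_inv : ∀ T', γ T' = (k * T')⁻¹ := fun T' => by rw [hγ, div_mul_eq_mul_div, inv_div]
  have hp' : ∀ ρ' T', p ρ' T' = ρ' * c ^ 2 * k * T' := fun ρ' T' => by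
    rw [hp, hγ_inv, div_inv_eq_mul]; ring
  have hb' : ∀ ρ' T', b ρ' T' = ρ' * c ^ 2 * (k * T' * G (k * T')⁻¹) := fun ρ' T' => by
    rw [hb, hγ_inv, div_inv_eq_mul]; ring
  have hpρ : deriv (fun ρ' => p ρ' T) ρ = c ^ 2 * k * T := by simp [hp']
  have hbρ : deriv (fun ρ' => b ρ' T) ρ = c ^ 2 * (k * T * G (k * T)⁻¹) := by simp [hb']
  have hpT : deriv (fun T' => p ρ T') T = ρ * c ^ 2 * k := by simp [hp']
  have hbT : deriv (fun T' => b ρ T') T = ρ * c ^ 2 * ((G (k * T)⁻¹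
      - (k * T)⁻¹ * (-1 - 5 * G (k * T)⁻¹ / (k * T)⁻¹ + G (k * T)⁻¹ ^ 2)) * k) := by
    simp_rw [hb']
    exact ((hasDerivAt_const_mul_mul_comp_inv hkT.ne' (hG _ (inv_pos.2 hkT))).const_mul _).deriv
  rw [ha, he, hp', hb', hpρ, hbρ, hpT, hbT, hγ_inv]
  generalize G (k * T)⁻¹ = g
  have hk : k ≠ 0 := by positivity
  field_simp
  ring

/-- With the monatomic ideal-gas state equations
`e = ρc²(G − 1/γ)`, `p = ρc²/γ` (with `γ = mc²/(k_B T)`) and triple-tensor coefficients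
`a = ρc²(1/4 + G/γ)`, `b = ρc²G/γ`, the compatibility condition
`a = (1/4){ -b + (e + p - T p_T)(b_ρ/p_ρ) + T b_T }` holds identically. -/
theorem monatomic_compatibility
    (c m kB : ℝ) (hc : 0 < c) (hm : 0 < m) (hkB : 0 < kB)
    (G : ℝ → ℝ)
    (hG : ∀ x : ℝ, 0 < x → HasDerivAt G (-1 - 5 * G x / x + (G x) ^ 2) x)
    (γ : ℝ → ℝ) (hγ : ∀ T : ℝ, γ T = m * c ^ 2 / (kB * T))
    (e p a b : ℝ → ℝ → ℝ)
    (he : ∀ ρ T : ℝ, e ρ T = ρ * c ^ 2 * (G (γ T) - 1 / γ T))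
    (hp : ∀ ρ T : ℝ, p ρ T = ρ * c ^ 2 / γ T)
    (ha : ∀ ρ T : ℝ, a ρ T = ρ * c ^ 2 * (1 / 4 + G (γ T) / γ T))
    (hb : ∀ ρ T : ℝ, b ρ T = ρ * c ^ 2 * G (γ T) / γ T)
    (ρ T : ℝ) (hρ : 0 < ρ) (hT : 0 < T) :
    a ρ T = (1 / 4) * (-(b ρ T)
      + (e ρ T + p ρ T - T * deriv (fun T' => p ρ T') T)
        * (deriv (fun ρ' => b ρ' T) ρ / deriv (fun ρ' => p ρ' T) ρ)
      + T * deriv (fun T' => b ρ T') T) :=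
  monatomic_compatibility_general c m kB hc hm hkB G hG γ hγ e p a b he hp ha hb ρ T hT
end

section
/- For the relativistic polyatomic coefficients a = (1/4)c²ρ(1/γ² + ω/γ + ω² − ω′) and b = c²ρ(γω + 1)/γ² with e = ρc²ω, p = ρc²/γ and γ = mc²/(k_BT), the reduced compatibility condition a = (1/4){ b(e/p − 1) + T b_T } holds identically. -/
/-!
Write `b = B ∘ γ` with `B x = C (x ω(x) + 1) / x²`. Since `γ ∝ 1/T`, the Euler relation
`T γ' = -γ` turns `T b_T` into `-γ B'(γ) = C (2/γ² + ω/γ - ω')`, while `e/p = γ ω` gives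
`b (e/p - 1) = C (ω² - 1/γ²)`. The two add up to `C (1/γ² + ω/γ + ω² - ω') = 4a`.
-/

theorem hasDerivAt_div_const_mul {K k T : ℝ} (hT : T ≠ 0) :
    HasDerivAt (fun t => K / (k * t)) (-(K / (k * T)) / T) T := by
  have hfun : (fun t => K / (k * t)) = fun t => K / k * t⁻¹ := by
    funext t
    rw [div_mul_eq_div_div, div_eq_mul_inv]
  rw [hfun]
  refine ((hasDerivAt_inv hT).const_mul (K / k)).congr_deriv ?_
  field_simp

theorem mul_deriv_comp_of_euler {f γ : ℝ → ℝ} {f' T : ℝ} (hT : T ≠ 0)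
    (hγ : HasDerivAt γ (-(γ T) / T) T) (hf : HasDerivAt f f' (γ T)) :
    T * deriv (f ∘ γ) T = -(γ T) * f' := by
  rw [(hf.comp T hγ).deriv]
  field_simp

theorem hasDerivAt_mul_self_add_one_div_sq {ω : ℝ → ℝ} {ω' x : ℝ} (C : ℝ) (hx : x ≠ 0)
    (hω : HasDerivAt ω ω' x) :
    HasDerivAt (fun y => C * (y * ω y + 1) / y ^ 2)
      (C * (ω' / x - ω x / x ^ 2 - 2 / x ^ 3)) x := by
  have hnum := (((hasDerivAt_id' x).fun_mul hω).add_const 1).const_mul C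
  have h := hnum.fun_div (hasDerivAt_pow 2 x) (pow_ne_zero 2 hx)
  refine h.congr_deriv ?_
  field_simp
  ring

/-- For the relativistic polyatomic coefficients
`a = (1/4)c²ρ(1/γ² + ω/γ + ω² − ω′)` and `b = c²ρ(γω + 1)/γ²`, with `e = ρc²ω`,
`p = ρc²/γ`, `γ = mc²/(k_BT)`, the reduced compatibility condition
`a = (1/4){ b(e/p − 1) + T b_T }` holds identically. -/
theorem polyatomic_ACPR_compatibility
    (m c kB : ℝ) (hm : 0 < m) (hc : 0 < c) (hkB : 0 < kB)
    (ω ω' : ℝ → ℝ) (hω : ∀ x : ℝ, HasDerivAt ω (ω' x) x)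
    (γ : ℝ → ℝ) (hγ : ∀ T : ℝ, γ T = m * c ^ 2 / (kB * T))
    (e p a b : ℝ → ℝ → ℝ)
    (he : ∀ ρ T : ℝ, e ρ T = ρ * c ^ 2 * ω (γ T))
    (hp : ∀ ρ T : ℝ, p ρ T = ρ * c ^ 2 / γ T)
    (ha : ∀ ρ T : ℝ, a ρ T = (1 / 4) * c ^ 2 * ρ *
      (1 / (γ T) ^ 2 + ω (γ T) / γ T + (ω (γ T)) ^ 2 - ω' (γ T)))
    (hb : ∀ ρ T : ℝ, b ρ T = c ^ 2 * ρ * (γ T * ω (γ T) + 1) / (γ T) ^ 2)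
    (ρ T : ℝ) (hρ : 0 < ρ) (hT : 0 < T) :
    a ρ T = (1 / 4) * (b ρ T * (e ρ T / p ρ T - 1)
      + T * deriv (fun t => b ρ t) T) := by
  have hγT : γ T ≠ 0 := by rw [hγ]; positivity
  have hγ_euler : HasDerivAt γ (-(γ T) / T) T := by
    rw [hγ T]
    convert hasDerivAt_div_const_mul (K := m * c ^ 2) (k := kB) hT.ne' using 1
    exact funext hγ
  have hb_comp : (fun t => b ρ t) = (fun x => c ^ 2 * ρ * (x * ω x + 1) / x ^ 2) ∘ γ :=
    funext (hb ρ)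
  have hTb := mul_deriv_comp_of_euler hT.ne' hγ_euler
    (hasDerivAt_mul_self_add_one_div_sq (c ^ 2 * ρ) hγT (hω (γ T)))
  rw [← hb_comp] at hTb
  rw [hTb, ha, hb, he, hp]
  field_simp
  ring
end
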